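/- arXiv:1703.00990 — 7 statements merged into one kernel-verified Lean document; each statement's English description precedes it below -/
import Mathlib

section
/- For every positive integer r, the quantity 2 \cdot r^{-3} \sum_{d | r} \mu(r/d) \binom{3d-1}{d-1} is an integer; i.e., r^3 divides 2 \sum_{d | r} \mu(r/d) \binom{3d-1}{d-1}. -/
/-!
Write `C n = (3n-1).choose (n-1)`. For `r = p^k m` with `p ∤ m`, only the divisors `p^k b` and
`p^(k-1) b` (`b ∣ m`) survive in the Möbius sum, so it suffices to show
`p^(3k) ∣ 2 (C (p^k e) - C (p^(k-1) e))`. Put `N = p^k e = p n`. Writing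
`C N = ∏_{0<j<N} (2N + j) / j` and removing the factors with `p ∣ j` leaves `C n`, so
`C N = C n ∏ (1 + 2N/j)` over `0 < j < N`, `p ∤ j`. Modulo `p^(3k)` we have `N^3 = 0`, and
pairing `j` with `N - j` makes the linear term quadratic in `N`: twice the product is
`2 - 6 N² ∑ j⁻²`. Finally `6 ∑ j⁻² ≡ 0 (mod p^k)`, as the sum is a multiple of `∑ u²` over the
units `u` mod `p^k`: scaling by `2` gives `3 ∑ u² = 0` for odd `p`, and for `p = 2` it is the
explicit sum of the odd squares.
-/

open Finset ArithmeticFunction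

theorem sum_divisors_mul_of_coprime {M : Type*} [AddCommMonoid M] {m n : ℕ} (h : m.Coprime n)
    (f : ℕ → M) :
    ∑ d ∈ (m * n).divisors, f d = ∑ a ∈ m.divisors, ∑ b ∈ n.divisors, f (a * b) := by
  rw [h.divisors_mul, sum_map, ← sum_product']
  exact sum_attach (m.divisors ×ˢ n.divisors) fun x => f (x.1 * x.2)

theorem moebius_prime_pow_mul_div {p k m i b : ℕ} (hpm : ¬ p ∣ m) (hp : p.Prime) (hi : i ≤ k)
    (hb : b ∣ m) :
    moebius (p ^ k * m / (p ^ i * b)) = moebius (p ^ (k - i)) * moebius (m / b) := by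
  obtain ⟨c, rfl⟩ := hb
  have hb0 : 0 < b := Nat.pos_of_ne_zero fun h => hpm (by simp [h])
  have hc : ¬ p ∣ c := fun h => hpm (dvd_mul_of_dvd_right h b)
  rw [Nat.mul_div_cancel_left c hb0, ← Nat.sub_add_cancel hi, pow_add, Nat.add_sub_cancel,
    show p ^ (k - i) * p ^ i * (b * c) = p ^ i * b * (p ^ (k - i) * c) by ring,
    Nat.mul_div_cancel_left _ (Nat.mul_pos (pow_pos hp.pos i) hb0)]
  exact isMultiplicative_moebius.map_mul_of_coprime
    (Nat.Coprime.pow_left _ (hp.coprime_iff_not_dvd.2 hc))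

theorem sum_divisors_prime_pow_mul_moebius {p k m : ℕ} (hp : p.Prime) (hk : 0 < k)
    (hpm : ¬ p ∣ m) (f : ℕ → ℤ) :
    ∑ d ∈ (p ^ k * m).divisors, moebius (p ^ k * m / d) * f d =
      ∑ b ∈ m.divisors, moebius (m / b) * (f (p ^ k * b) - f (p ^ (k - 1) * b)) := by
  rw [sum_divisors_mul_of_coprime (Nat.Coprime.pow_left k (hp.coprime_iff_not_dvd.2 hpm)),
    Nat.sum_divisors_prime_pow hp]
  have hsplit : ∀ i ∈ range (k + 1),
      ∑ b ∈ m.divisors, (moebius (p ^ k * m / (p ^ i * b)) : ℤ) * f (p ^ i * b) =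
        moebius (p ^ (k - i)) * ∑ b ∈ m.divisors, moebius (m / b) * f (p ^ i * b) := by
    intro i hi
    rw [mul_sum]
    refine sum_congr rfl fun b hb => ?_
    rw [moebius_prime_pow_mul_div hpm hp (Nat.lt_succ_iff.1 (mem_range.1 hi))
      (Nat.dvd_of_mem_divisors hb)]
    ring
  rw [sum_congr rfl hsplit, sum_eq_add_of_mem k (k - 1) (mem_range.2 (by omega))
    (mem_range.2 (by omega)) (by omega)]
  · rw [Nat.sub_self, Nat.sub_sub_self hk, pow_zero, pow_one, moebius_apply_one,
      moebius_apply_prime hp]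
    simp only [one_mul, neg_one_mul, ← sub_eq_add_neg, ← sum_sub_distrib, mul_sub]
  · intro i hi hne
    have := mem_range.1 hi
    rw [moebius_apply_prime_pow hp (by omega), if_neg (by omega), zero_mul]

theorem pow_dvd_mul_sum_moebius_mul {s : ℕ} {c : ℤ} {f : ℕ → ℤ}
    (hf : ∀ p k e : ℕ, p.Prime → 0 < k → 0 < e →
      (p : ℤ) ^ (s * k) ∣ c * (f (p ^ k * e) - f (p ^ (k - 1) * e)))
    {r : ℕ} (hr : 0 < r) :
    (r : ℤ) ^ s ∣ c * ∑ d ∈ r.divisors, moebius (r / d) * f d := by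
  rw [← Nat.cast_pow, Int.natCast_dvd, Nat.dvd_iff_prime_pow_dvd_dvd]
  intro p j hp hj
  rw [← Int.natCast_dvd]
  push_cast
  set k := r.factorization p
  have hjk : j ≤ s * k := by
    simpa [Nat.factorization_pow] using
      (hp.pow_dvd_iff_le_factorization (pow_ne_zero s hr.ne')).1 hj
  refine (pow_dvd_pow _ hjk).trans ?_
  rcases Nat.eq_zero_or_pos k with hk | hk
  · simp [hk]
  rw [← Nat.ordProj_mul_ordCompl_eq_self r p,
    sum_divisors_prime_pow_mul_moebius hp hk (Nat.not_dvd_ordCompl hp hr.ne'), mul_sum]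
  exact dvd_sum fun b hb => (hf p k b hp hk (Nat.pos_of_mem_divisors hb)).trans
    (by rw [mul_left_comm]; exact dvd_mul_left _ _)

section Algebra

variable {R ι : Type*} [CommRing R]

theorem two_mul_prod_one_add_mul {c : R} (hc : c ^ 3 = 0) (s : Finset ι) (w : ι → R) :
    2 * ∏ i ∈ s, (1 + c * w i) =
      2 + 2 * c * ∑ i ∈ s, w i + c ^ 2 * ((∑ i ∈ s, w i) ^ 2 - ∑ i ∈ s, w i ^ 2) := by
  classical
  induction s using Finset.induction with
  | empty => simp
  | insert a s ha ih =>
    rw [prod_insert ha, sum_insert ha, sum_insert ha]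
    linear_combination (1 + c * w a) * ih + (w a * ((∑ i ∈ s, w i) ^ 2 - ∑ i ∈ s, w i ^ 2)) * hc

variable {s : Finset ι} {x w : ι → R} {σ : ι → ι} {N : R}

theorem two_mul_mul_sum_eq_of_involution (hN : N ^ 3 = 0) (hxw : ∀ i ∈ s, x i * w i = 1)
    (hσ : ∀ i ∈ s, σ i ∈ s) (hσσ : ∀ i ∈ s, σ (σ i) = i) (hxσ : ∀ i ∈ s, x i + x (σ i) = N) :
    2 * N * ∑ i ∈ s, w i = -(N ^ 2 * ∑ i ∈ s, w i ^ 2) := by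
  have hreindex : ∑ i ∈ s, w (σ i) = ∑ i ∈ s, w i :=
    sum_nbij' σ σ hσ hσ hσσ hσσ fun i hi => rfl
  calc 2 * N * ∑ i ∈ s, w i = ∑ i ∈ s, N * (w i + w (σ i)) := by
        rw [← mul_sum, sum_add_distrib, hreindex]; ring
    _ = ∑ i ∈ s, -(N ^ 2 * w i ^ 2) := sum_congr rfl fun i hi => by
        linear_combination (N * w i * w (σ i) + N ^ 2 * w i ^ 2 * w (σ i)) * hxσ i hi
          - (N * w (σ i) + N ^ 2 * w i * w (σ i)) * hxw i hi
          - (N * w i + N ^ 2 * w i ^ 2) * hxw (σ i) (hσ i hi) + w i ^ 2 * w (σ i) * hN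
    _ = -(N ^ 2 * ∑ i ∈ s, w i ^ 2) := by rw [sum_neg_distrib, mul_sum]

theorem two_mul_prod_two_mul_add_eq_of_involution (hN : N ^ 3 = 0)
    (hxw : ∀ i ∈ s, x i * w i = 1) (hσ : ∀ i ∈ s, σ i ∈ s) (hσσ : ∀ i ∈ s, σ (σ i) = i)
    (hxσ : ∀ i ∈ s, x i + x (σ i) = N) :
    2 * ∏ i ∈ s, (2 * N + x i) = (∏ i ∈ s, x i) * (2 - 6 * N ^ 2 * ∑ i ∈ s, w i ^ 2) := by
  have hfactor : ∏ i ∈ s, (2 * N + x i) = (∏ i ∈ s, x i) * ∏ i ∈ s, (1 + 2 * N * w i) := by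
    rw [← prod_mul_distrib]
    exact prod_congr rfl fun i hi => by linear_combination (-2 * N) * hxw i hi
  have hc : (2 * N) ^ 3 = 0 := by rw [mul_pow, hN, mul_zero]
  have hsum := two_mul_mul_sum_eq_of_involution hN hxw hσ hσσ hxσ
  rw [hfactor, mul_left_comm, two_mul_prod_one_add_mul hc]
  linear_combination (∏ i ∈ s, x i) * ((2 + 2 * N * ∑ i ∈ s, w i - N ^ 2 * ∑ i ∈ s, w i ^ 2) * hsum
    + (N * (∑ i ∈ s, w i ^ 2) ^ 2) * hN)

end Algebra

def nonMultiples (p N : ℕ) : Finset ℕ := (range N).filter (fun j => ¬ p ∣ j)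

theorem mem_nonMultiples {p N j : ℕ} : j ∈ nonMultiples p N ↔ j < N ∧ ¬ p ∣ j := by
  simp [nonMultiples]

theorem pos_of_mem_nonMultiples {p N j : ℕ} (hj : j ∈ nonMultiples p N) : 0 < j :=
  Nat.pos_of_ne_zero fun h => (mem_nonMultiples.1 hj).2 (h ▸ dvd_zero p)

theorem sub_mem_nonMultiples {p N j : ℕ} (hpN : p ∣ N) (hj : j ∈ nonMultiples p N) :
    N - j ∈ nonMultiples p N := by
  obtain ⟨hjN, hpj⟩ := mem_nonMultiples.1 hj
  have hj0 := pos_of_mem_nonMultiples hj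
  refine mem_nonMultiples.2 ⟨by omega, fun h => hpj ?_⟩
  simpa [Nat.sub_sub_self hjN.le] using Nat.dvd_sub hpN h

theorem sum_nonMultiples_mul_eq {M : Type*} [AddCommMonoid M] {p q : ℕ} (hpq : p ∣ q)
    (F : ZMod q → M) (e : ℕ) :
    ∑ j ∈ nonMultiples p (q * e), F j = e • ∑ j ∈ nonMultiples p q, F j := by
  simp only [nonMultiples, sum_filter]
  induction e with
  | zero => simp
  | succ e ih =>
    have hshift : ∀ x, (p ∣ q * e + x ↔ p ∣ x) := fun _ => Nat.dvd_add_right (hpq.mul_right e)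
    rw [mul_add_one, sum_range_add, ih, succ_nsmul]
    simp [hshift]

theorem isUnit_natCast_iff_not_dvd {p k : ℕ} (hp : p.Prime) (hk : 0 < k) (v : ℕ) :
    IsUnit (v : ZMod (p ^ k)) ↔ ¬ p ∣ v := by
  rw [ZMod.isUnit_iff_coprime, Nat.coprime_pow_right_iff hk, Nat.coprime_comm,
    hp.coprime_iff_not_dvd]

theorem sum_units_eq_sum_nonMultiples {M : Type*} [AddCommMonoid M] {p k : ℕ} [hp : Fact p.Prime]
    (hk : 0 < k) (g : ZMod (p ^ k) → M) :
    ∑ u : (ZMod (p ^ k))ˣ, g u = ∑ v ∈ nonMultiples p (p ^ k), g v := by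
  have himage : (nonMultiples p (p ^ k)).image (Nat.cast : ℕ → ZMod (p ^ k)) =
      univ.map ⟨Units.val, Units.val_injective⟩ := by
    ext x
    simp only [mem_image, mem_nonMultiples, mem_map, mem_univ, true_and,
      Function.Embedding.coeFn_mk]
    constructor
    · rintro ⟨v, ⟨-, hv⟩, rfl⟩
      exact (isUnit_natCast_iff_not_dvd hp.out hk v).2 hv
    · rintro ⟨u, rfl⟩
      refine ⟨(u : ZMod (p ^ k)).val, ⟨ZMod.val_lt _, ?_⟩, ZMod.natCast_zmod_val _⟩
      rw [← isUnit_natCast_iff_not_dvd hp.out hk, ZMod.natCast_zmod_val]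
      exact u.isUnit
  have hinj : Set.InjOn (Nat.cast : ℕ → ZMod (p ^ k)) (nonMultiples p (p ^ k)) :=
    fun a ha b hb hab => by
      rw [← ZMod.val_cast_of_lt (mem_nonMultiples.1 ha).1, hab,
        ZMod.val_cast_of_lt (mem_nonMultiples.1 hb).1]
  rw [← sum_image hinj, himage, sum_map]
  rfl

theorem sq_mul_sum_units_sq {R : Type*} [CommRing R] [Fintype Rˣ] (a : Rˣ) :
    (a : R) ^ 2 * ∑ u : Rˣ, (u : R) ^ 2 = ∑ u : Rˣ, (u : R) ^ 2 := by
  rw [mul_sum]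
  exact Fintype.sum_equiv (Equiv.mulLeft a) _ _ fun u => by simp [mul_pow]

theorem three_mul_sum_nonMultiples_two_sq_add (m : ℕ) :
    3 * ∑ v ∈ nonMultiples 2 (2 * m), v ^ 2 + m = 4 * m ^ 3 := by
  induction m with
  | zero => simp [nonMultiples]
  | succ m ih =>
    simp only [nonMultiples, sum_filter] at ih ⊢
    rw [show 2 * (m + 1) = 2 * m + 1 + 1 by ring, sum_range_succ, sum_range_succ]
    have h1 : ¬ 2 ∣ 2 * m + 1 := by omega
    simp only [dvd_mul_right, not_true_eq_false, if_false, h1, not_false_eq_true, if_true,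
      add_zero]
    linear_combination ih

theorem six_mul_sum_units_sq_eq_zero {p : ℕ} [hp : Fact p.Prime] (k : ℕ) :
    6 * ∑ u : (ZMod (p ^ k))ˣ, (u : ZMod (p ^ k)) ^ 2 = 0 := by
  rcases Nat.eq_zero_or_pos k with rfl | hk
  · exact Subsingleton.elim (α := ZMod 1) _ _
  rcases eq_or_ne p 2 with rfl | hp2
  · obtain ⟨m, hm⟩ : ∃ m, 2 * m = 2 ^ k := ⟨2 ^ (k - 1), by rw [← pow_succ', Nat.sub_add_cancel hk]⟩
    have h := congrArg (Nat.cast : ℕ → ZMod (2 ^ k)) (three_mul_sum_nonMultiples_two_sq_add m)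
    have hm' := congrArg (Nat.cast : ℕ → ZMod (2 ^ k)) hm
    have h0 : ((2 ^ k : ℕ) : ZMod (2 ^ k)) = 0 := ZMod.natCast_self _
    rw [hm] at h
    push_cast at h hm' h0
    rw [sum_units_eq_sum_nonMultiples hk (· ^ 2)]
    linear_combination 2 * h + (4 * (m : ZMod (2 ^ k)) ^ 2 - 1) * (hm' + h0)
  · have hunit : IsUnit (2 : ZMod (p ^ k)) := by
      exact_mod_cast (isUnit_natCast_iff_not_dvd hp.out hk 2).2
        fun h => hp2 ((Nat.prime_dvd_prime_iff_eq hp.out Nat.prime_two).1 h)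
    have h := sq_mul_sum_units_sq hunit.unit
    rw [IsUnit.unit_spec] at h
    linear_combination 2 * h

theorem natCast_mul_eq_zero_of_castHom_eq_zero {a b n : ℕ} (hbn : b ∣ n) (hnab : n ∣ a * b)
    {x : ZMod n} (hx : ZMod.castHom hbn (ZMod b) x = 0) : (a : ZMod n) * x = 0 := by
  obtain ⟨z, rfl⟩ := ZMod.intCast_surjective x
  rw [map_intCast, ZMod.intCast_zmod_eq_zero_iff_dvd] at hx
  rw [← Int.cast_natCast, ← Int.cast_mul, ZMod.intCast_zmod_eq_zero_iff_dvd]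
  exact (Int.natCast_dvd_natCast.2 hnab).trans (by push_cast; exact mul_dvd_mul_left _ hx)

theorem six_mul_sum_nonMultiples_inv_sq_eq_zero {p k : ℕ} [Fact p.Prime] (hk : 0 < k) (e : ℕ) :
    6 * ∑ j ∈ nonMultiples p (p ^ k * e), ((j : ZMod (p ^ k))⁻¹) ^ 2 = 0 := by
  have hinv : ∑ u : (ZMod (p ^ k))ˣ, ((u : ZMod (p ^ k))⁻¹) ^ 2 =
      ∑ u : (ZMod (p ^ k))ˣ, (u : ZMod (p ^ k)) ^ 2 := by
    simp_rw [ZMod.inv_coe_unit]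
    exact Fintype.sum_equiv (Equiv.inv _) _ _ fun _ => rfl
  rw [sum_nonMultiples_mul_eq (dvd_pow_self p hk.ne') (fun x => (x⁻¹) ^ 2) e,
    ← sum_units_eq_sum_nonMultiples hk (fun x => (x⁻¹) ^ 2), hinv, mul_smul_comm,
    six_mul_sum_units_sq_eq_zero, smul_zero]

theorem six_mul_sq_mul_sum_inv_sq_eq_zero {p k : ℕ} [hp : Fact p.Prime] (hk : 0 < k) (e : ℕ) :
    6 * ((p ^ k * e : ℕ) : ZMod (p ^ (3 * k))) ^ 2 *
      ∑ j ∈ nonMultiples p (p ^ k * e), ((j : ZMod (p ^ (3 * k)))⁻¹) ^ 2 = 0 := by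
  have hdvd : p ^ k ∣ p ^ (3 * k) := pow_dvd_pow p (by omega)
  have hmap : ∀ j ∈ nonMultiples p (p ^ k * e),
      ZMod.castHom hdvd (ZMod (p ^ k)) (j : ZMod (p ^ (3 * k)))⁻¹ = (j : ZMod (p ^ k))⁻¹ := by
    intro j hj
    have h := congrArg (ZMod.castHom hdvd (ZMod (p ^ k)))
      (ZMod.coe_mul_inv_eq_one j (hp.out.coprime_pow_of_not_dvd (mem_nonMultiples.1 hj).2))
    rw [map_mul, map_one, map_natCast] at h
    exact (ZMod.inv_eq_of_mul_eq_one _ _ _ h).symm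
  have hmod : ZMod.castHom hdvd (ZMod (p ^ k)) (6 * (e : ZMod (p ^ (3 * k))) ^ 2 *
      ∑ j ∈ nonMultiples p (p ^ k * e), ((j : ZMod (p ^ (3 * k)))⁻¹) ^ 2) = 0 := by
    rw [map_mul, map_sum, sum_congr rfl fun j hj => by rw [map_pow, hmap j hj]]
    simp only [map_mul, map_pow, map_natCast, map_ofNat]
    linear_combination
      (e : ZMod (p ^ k)) ^ 2 * six_mul_sum_nonMultiples_inv_sq_eq_zero (p := p) hk e
  rw [← natCast_mul_eq_zero_of_castHom_eq_zero (a := p ^ (2 * k)) hdvd (dvd_of_eq (by ring)) hmod]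
  push_cast
  ring

def tripleChoose (n : ℕ) : ℕ := (3 * n - 1).choose (n - 1)

theorem cast_add_choose_eq_prod (a b : ℕ) :
    ((a + b).choose b : ℚ) = ∏ j ∈ Ico 1 (b + 1), ((a + j : ℕ) : ℚ) / j := by
  induction b with
  | zero => simp
  | succ b ih =>
    rw [prod_Ico_succ_top (by omega), ← ih]
    have h : ((a + b + 1 : ℕ) : ℚ) * (a + b).choose b = (a + b + 1).choose (b + 1) * (b + 1) := by
      exact_mod_cast Nat.add_one_mul_choose_eq (a + b) b
    rw [mul_div_assoc', eq_div_iff (by positivity)]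
    push_cast at h ⊢
    linear_combination -h

theorem cast_tripleChoose_eq_prod (n : ℕ) :
    (tripleChoose n : ℚ) = ∏ j ∈ Ico 1 n, ((2 * n + j : ℕ) : ℚ) / j := by
  rcases n with _ | n
  · simp [tripleChoose]
  · have h := cast_add_choose_eq_prod (2 * (n + 1)) n
    rwa [show 2 * (n + 1) + n = 3 * (n + 1) - 1 by omega] at h

theorem prod_Ico_one_mul_eq {M : Type*} [CommMonoid M] {p : ℕ} (hp : 0 < p) (n : ℕ)
    (g : ℕ → M) :
    ∏ j ∈ Ico 1 (p * n), g j = (∏ j ∈ nonMultiples p (p * n), g j) * ∏ j ∈ Ico 1 n, g (p * j) := by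
  have hnon : (Ico 1 (p * n)).filter (fun j => ¬ p ∣ j) = nonMultiples p (p * n) := by
    ext j
    simp only [mem_filter, mem_Ico, mem_nonMultiples]
    exact ⟨fun h => ⟨h.1.2, h.2⟩,
      fun h => ⟨⟨pos_of_mem_nonMultiples (mem_nonMultiples.2 h), h.1⟩, h.2⟩⟩
  have hmul : (Ico 1 (p * n)).filter (fun j => p ∣ j) = (Ico 1 n).image (p * ·) := by
    ext j
    simp only [mem_filter, mem_Ico, mem_image]
    constructor
    · rintro ⟨⟨h1, h2⟩, c, rfl⟩
      exact ⟨c, ⟨Nat.pos_of_mul_pos_left h1, Nat.lt_of_mul_lt_mul_left h2⟩, rfl⟩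
    · rintro ⟨c, ⟨h1, h2⟩, rfl⟩
      exact ⟨⟨Nat.mul_pos hp h1, Nat.mul_lt_mul_of_pos_left h2 hp⟩, dvd_mul_right p c⟩
  rw [← prod_filter_not_mul_prod_filter (Ico 1 (p * n)) (fun j => p ∣ j), hnon, hmul,
    prod_image fun a _ b _ h => Nat.eq_of_mul_eq_mul_left hp h]

theorem cast_tripleChoose_mul_eq {p : ℕ} (hp : 0 < p) (n : ℕ) :
    (tripleChoose (p * n) : ℚ) =
      tripleChoose n * ∏ j ∈ nonMultiples p (p * n), ((2 * (p * n) + j : ℕ) : ℚ) / j := by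
  rw [cast_tripleChoose_eq_prod, prod_Ico_one_mul_eq hp, cast_tripleChoose_eq_prod, mul_comm]
  congr 1
  refine prod_congr rfl fun j _ => ?_
  have : (p : ℚ) ≠ 0 := by exact_mod_cast hp.ne'
  push_cast
  field_simp

theorem tripleChoose_mul_mul_prod_eq {p : ℕ} (hp : 0 < p) (n : ℕ) :
    tripleChoose (p * n) * ∏ j ∈ nonMultiples p (p * n), j =
      tripleChoose n * ∏ j ∈ nonMultiples p (p * n), (2 * (p * n) + j) := by
  have h := cast_tripleChoose_mul_eq hp n
  have hne : ∀ j ∈ nonMultiples p (p * n), (j : ℚ) ≠ 0 := fun j hj =>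
    by exact_mod_cast (pos_of_mem_nonMultiples hj).ne'
  rw [prod_div_distrib, mul_div_assoc', eq_div_iff (prod_ne_zero_iff.2 hne)] at h
  apply Nat.cast_injective (R := ℚ)
  push_cast at h ⊢
  exact h

theorem pow_three_mul_dvd_two_mul_tripleChoose_sub {p k : ℕ} (hp : p.Prime) (hk : 0 < k)
    (e : ℕ) :
    (p : ℤ) ^ (3 * k) ∣ 2 * ((tripleChoose (p ^ k * e) : ℤ) - tripleChoose (p ^ (k - 1) * e)) := by
  have : Fact p.Prime := ⟨hp⟩
  have h6 := six_mul_sq_mul_sum_inv_sq_eq_zero (p := p) hk e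
  set N := p ^ k * e
  set n := p ^ (k - 1) * e
  have hN : p * n = N := by rw [← mul_assoc, ← pow_succ', Nat.sub_add_cancel hk]
  have hpN : p ∣ N := hN ▸ dvd_mul_right p n
  have hJ : ∀ j ∈ nonMultiples p N, j < N := fun j hj => (mem_nonMultiples.1 hj).1
  have hN3 : (N : ZMod (p ^ (3 * k))) ^ 3 = 0 := by
    rw [← Nat.cast_pow, ZMod.natCast_eq_zero_iff, mul_pow, ← pow_mul, mul_comm k 3]
    exact dvd_mul_right _ _
  have hxw : ∀ j ∈ nonMultiples p N, (j : ZMod (p ^ (3 * k))) * (j : ZMod (p ^ (3 * k)))⁻¹ = 1 :=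
    fun j hj => ZMod.coe_mul_inv_eq_one j (hp.coprime_pow_of_not_dvd (mem_nonMultiples.1 hj).2)
  have hprod := two_mul_prod_two_mul_add_eq_of_involution hN3 hxw
    (fun j hj => sub_mem_nonMultiples hpN hj) (fun j hj => Nat.sub_sub_self (hJ j hj).le)
    (fun j hj => by rw [Nat.cast_sub (hJ j hj).le]; ring)
  have hkey := congrArg (Nat.cast : ℕ → ZMod (p ^ (3 * k)))
    (hN ▸ tripleChoose_mul_mul_prod_eq hp.pos n)
  push_cast at hkey
  have hB : IsUnit (∏ j ∈ nonMultiples p N, (j : ZMod (p ^ (3 * k)))) :=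
    IsUnit.prod_iff.2 fun j hj => .of_mul_eq_one _ (hxw j hj)
  rw [← Nat.cast_pow, ← ZMod.intCast_zmod_eq_zero_iff_dvd]
  push_cast
  refine hB.mul_left_injective ?_
  linear_combination 2 * hkey + (tripleChoose n : ZMod (p ^ (3 * k))) * hprod
    - ((tripleChoose n : ZMod (p ^ (3 * k))) * ∏ j ∈ nonMultiples p N, (j : ZMod (p ^ (3 * k))))
      * h6

open ArithmeticFunction in
theorem stmt_1 (r : ℕ) (hr : 0 < r) :
    ((r : ℤ))^3 ∣ 2 * ∑ d ∈ r.divisors, moebius (r / d) * (Nat.choose (3*d - 1) (d - 1) : ℤ) :=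
  pow_dvd_mul_sum_moebius_mul
    (fun _ _ e hp hk _ => pow_three_mul_dvd_two_mul_tripleChoose_sub hp hk e) hr
end

section
/- Let p be an odd prime, k \geq 1, d a positive integer with p \nmid d, and set x = 2 p^k d. Then the ratio \prod_{1 \le j \le d p^k, p \nmid j} (x + j) / \prod_{1 \le j \le d p^k, p \nmid j} j, viewed as a p-adic integer (or as a congruence of the integer numerator against the denominator), is congruent to 1 modulo p^{3k}. -/
/-!
Write `N = d p^k`, so that `x = 2N`, and compute in `ZMod (p^(3k))`, where every `j` prime
to `p` is a unit. Pairing `j` with `N - j` gives `(x + j)(x + N - j) = j(N - j) + 6N²`, and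
`(6N²)² = 0`, so the square of the left side is `∏ j(N - j) · (1 + 6N² ∑ 1/(j(N - j)))`.
Since `N² = d²p^{2k}`, the correction term only depends on `∑ 1/(j(N - j)) ≡ -∑ 1/j²` mod
`p^k`. The residues of the `j` run `d` times through the units of `ZMod (p^k)`, a set stable
under multiplication by the unit `2`, so this power sum `s` satisfies `4s = s`, i.e. `3s = 0`.
Hence both sides have the same square. They differ by a multiple of the nilpotent `x`, and
their sum is a unit because `p` is odd, so they are equal.
-/

open Finset
open scoped Ring

theorem Ring.inverse_neg {R : Type*} [Ring R] (a : R) : (-a)⁻¹ʳ = -a⁻¹ʳ := by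
  by_cases ha : IsUnit a
  · obtain ⟨u, rfl⟩ := ha
    rw [← Units.val_neg, Ring.inverse_unit, Ring.inverse_unit]
    simp
  · rw [Ring.inverse_non_unit _ ha, Ring.inverse_non_unit _ (by rwa [IsUnit.neg_iff]), neg_zero]

theorem map_ringInverse {R S F : Type*} [MonoidWithZero R] [MonoidWithZero S] [FunLike F R S]
    [MonoidHomClass F R S] (f : F) {a : R} (ha : IsUnit a) : f a⁻¹ʳ = (f a)⁻¹ʳ := by
  obtain ⟨u, rfl⟩ := ha
  rw [Ring.inverse_unit, show f u = (Units.map (f : R →* S) u : S) from rfl, Ring.inverse_unit]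
  simp

theorem Finset.prod_add_of_sq_eq_zero {ι R : Type*} [CommRing R] {t : R} (ht : t ^ 2 = 0)
    (s : Finset ι) {a : ι → R} (ha : ∀ i ∈ s, IsUnit (a i)) :
    ∏ i ∈ s, (a i + t) = (∏ i ∈ s, a i) * (1 + t * ∑ i ∈ s, (a i)⁻¹ʳ) := by
  classical
  induction s using Finset.induction_on with
  | empty => simp
  | insert i s hi ih =>
    rw [prod_insert hi, prod_insert hi, sum_insert hi,
      ih fun j hj => ha j (mem_insert_of_mem hj)]
    have hinv := Ring.mul_inverse_cancel _ (ha i (mem_insert_self i s))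
    linear_combination (∏ j ∈ s, a j) * t * (1 + t * ∑ j ∈ s, (a j)⁻¹ʳ) * hinv.symm
      + a i * (∏ j ∈ s, a j) * (a i)⁻¹ʳ * (∑ j ∈ s, (a j)⁻¹ʳ) * ht

theorem IsNilpotent.prod_add_sub_prod {ι R : Type*} [CommRing R] {x : R} (hx : IsNilpotent x)
    (s : Finset ι) (a : ι → R) : IsNilpotent (∏ i ∈ s, (x + a i) - ∏ i ∈ s, a i) := by
  obtain ⟨c, hc⟩ : x ∣ ∏ i ∈ s, (x + a i) - ∏ i ∈ s, a i := by
    have := Polynomial.sub_dvd_eval_sub x 0 (∏ i ∈ s, (Polynomial.X + Polynomial.C (a i)))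
    simpa [Polynomial.eval_prod] using this
  rw [hc]
  exact (Commute.all x c).isNilpotent_mul_right hx

theorem eq_of_sq_eq_sq_of_isNilpotent_sub {R : Type*} [CommRing R] (h2 : IsUnit (2 : R))
    {a b : R} (hb : IsUnit b) (hab : IsNilpotent (a - b)) (hsq : a ^ 2 = b ^ 2) : a = b := by
  have hunit : IsUnit (a + b) := by
    have := hab.isUnit_add_left_of_commute (h2.mul hb) (Commute.all _ _)
    rwa [show 2 * b + (a - b) = a + b by ring] at this
  rw [← sub_eq_zero, ← hunit.mul_left_eq_zero]
  linear_combination hsq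

theorem IsUnit.pow_mul_sum_ringInverse_pow {R : Type*} [CommRing R] [Fintype R] {g : R}
    (hg : IsUnit g) (n : ℕ) : g ^ n * ∑ x : R, x⁻¹ʳ ^ n = ∑ x : R, x⁻¹ʳ ^ n := by
  obtain ⟨u, rfl⟩ := hg
  conv_lhs => rw [← Equiv.sum_comp (Units.mulLeft u)]
  simp only [Units.mulLeft_apply, Ring.mul_inverse_rev, mul_pow, ← sum_mul, Ring.inverse_unit]
  rw [mul_comm, mul_assoc, ← mul_pow, Units.inv_mul, one_pow, mul_one]

theorem Finset.prod_reflect_of_mem {M : Type*} [CommMonoid M] {s : Finset ℕ} {N : ℕ}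
    (hs : ∀ j ∈ s, j ≤ N ∧ N - j ∈ s) (f : ℕ → M) :
    ∏ j ∈ s, f (N - j) = ∏ j ∈ s, f j :=
  prod_nbij' (N - ·) (N - ·) (fun j hj => (hs j hj).2) (fun j hj => (hs j hj).2)
    (fun j hj => Nat.sub_sub_self (hs j hj).1) (fun j hj => Nat.sub_sub_self (hs j hj).1)
    (fun _ _ => rfl)

theorem sq_prod_add_natCast_of_reflect {R : Type*} [CommRing R] {s : Finset ℕ} {N : ℕ}
    (hs : ∀ j ∈ s, j ≤ N ∧ N - j ∈ s) (x : R) :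
    (∏ j ∈ s, (x + j)) ^ 2 = ∏ j ∈ s, ((j : R) * (N - j) + x * (x + N)) := by
  rw [sq]
  nth_rewrite 2 [← prod_reflect_of_mem hs]
  rw [← prod_mul_distrib]
  refine prod_congr rfl fun j hj => ?_
  rw [Nat.cast_sub (hs j hj).1]
  ring

theorem sub_mem_filter_Icc_not_dvd {p N j : ℕ} (hN : p ∣ N)
    (hj : j ∈ (Icc 1 N).filter (¬ p ∣ ·)) :
    j ≤ N ∧ N - j ∈ (Icc 1 N).filter (¬ p ∣ ·) := by
  simp only [mem_filter, mem_Icc] at hj ⊢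
  have hjN : j ≠ N := fun h => hj.2 (h ▸ hN)
  refine ⟨hj.1.2, ⟨by omega, by omega⟩, fun h => hj.2 ?_⟩
  simpa [Nat.sub_sub_self hj.1.2] using Nat.dvd_sub hN h

theorem ZMod.sum_range_natCast {M : Type*} [AddCommMonoid M] (m : ℕ) [NeZero m]
    (g : ZMod m → M) : ∑ j ∈ range m, g j = ∑ x : ZMod m, g x :=
  sum_bij' (fun j _ => (j : ZMod m)) (fun x _ => x.val) (fun _ _ => mem_univ _)
    (fun x _ => mem_range.2 (ZMod.val_lt x)) (fun _ hj => ZMod.val_cast_of_lt (mem_range.1 hj))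
    (fun x _ => ZMod.natCast_zmod_val x) (fun _ _ => rfl)

theorem ZMod.sum_range_mul_natCast {M : Type*} [AddCommMonoid M] (m : ℕ) [NeZero m] (d : ℕ)
    (g : ZMod m → M) : ∑ j ∈ range (d * m), g j = d • ∑ x : ZMod m, g x := by
  induction d with
  | zero => simp
  | succ d ih =>
    rw [add_mul, one_mul, sum_range_add, ih, succ_nsmul, ← ZMod.sum_range_natCast]
    simp

theorem ZMod.sum_Icc_mul_natCast {M : Type*} [AddCommMonoid M] (m : ℕ) [NeZero m] (d : ℕ)
    (g : ZMod m → M) : ∑ j ∈ Icc 1 (d * m), g j = d • ∑ x : ZMod m, g x := by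
  rw [← Ico_add_one_right_eq_Icc, sum_Ico_eq_sum_range, Nat.add_sub_cancel,
    ← Equiv.sum_comp (Equiv.addLeft (1 : ZMod m))]
  simpa using ZMod.sum_range_mul_natCast m d (fun x => g (1 + x))

theorem ZMod.isUnit_two_of_odd {m : ℕ} (hm : Odd m) : IsUnit (2 : ZMod m) := by
  exact_mod_cast (ZMod.isUnit_iff_coprime 2 m).2 (Nat.coprime_two_left.2 hm)

theorem ZMod.three_mul_sum_ringInverse_sq_eq_zero {m : ℕ} [NeZero m] (hm : Odd m) :
    3 * ∑ x : ZMod m, x⁻¹ʳ ^ 2 = 0 := by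
  linear_combination (ZMod.isUnit_two_of_odd hm).pow_mul_sum_ringInverse_pow 2

theorem ZMod.isUnit_natCast_primePow_iff {p n j : ℕ} (hp : p.Prime) (hn : n ≠ 0) :
    IsUnit (j : ZMod (p ^ n)) ↔ ¬ p ∣ j := by
  rw [ZMod.isUnit_iff_coprime, Nat.coprime_pow_right_iff (Nat.pos_of_ne_zero hn),
    Nat.coprime_comm, hp.coprime_iff_not_dvd]

theorem ZMod.isUnit_natCast_mul_sub {p n N j : ℕ} (hp : p.Prime) (hn : n ≠ 0) (hN : p ∣ N)
    (hj : j ∈ (Icc 1 N).filter (¬ p ∣ ·)) : IsUnit ((j : ZMod (p ^ n)) * (N - j)) := by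
  obtain ⟨hjN, hsub⟩ := sub_mem_filter_Icc_not_dvd hN hj
  have := (ZMod.isUnit_natCast_primePow_iff hp hn).2 (mem_filter.1 hsub).2
  rw [Nat.cast_sub hjN] at this
  exact ((ZMod.isUnit_natCast_primePow_iff hp hn).2 (mem_filter.1 hj).2).mul this

theorem ZMod.natCast_mul_eq_zero_of_castHom_eq_zero {m n c : ℕ} [NeZero n] (hmn : m ∣ n)
    (hc : n ∣ c * m) {y : ZMod n} (hy : ZMod.castHom hmn (ZMod m) y = 0) :
    (c : ZMod n) * y = 0 := by
  rw [← ZMod.natCast_zmod_val y] at hy ⊢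
  rw [map_natCast, ZMod.natCast_eq_zero_iff] at hy
  obtain ⟨z, hz⟩ := hy
  rw [hz, ← Nat.cast_mul, ZMod.natCast_eq_zero_iff, ← mul_assoc]
  exact hc.mul_right z

theorem ZMod.natCast_mul_pow_pow_three_eq_zero (p k d : ℕ) :
    ((d * p ^ k : ℕ) : ZMod (p ^ (3 * k))) ^ 3 = 0 := by
  rw [← Nat.cast_pow, ZMod.natCast_eq_zero_iff, mul_pow, ← pow_mul, mul_comm k]
  exact dvd_mul_left _ _

theorem ZMod.three_mul_sum_filter_ringInverse_sq_eq_zero {p k : ℕ} (hp : p.Prime) (hpodd : Odd p)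
    (hk : k ≠ 0) (d : ℕ) :
    3 * ∑ j ∈ (Icc 1 (d * p ^ k)).filter (¬ p ∣ ·), (j : ZMod (p ^ k))⁻¹ʳ ^ 2 = 0 := by
  have : NeZero (p ^ k) := ⟨pow_ne_zero _ hp.ne_zero⟩
  rw [sum_filter_of_ne fun j _ hj => ?_, ZMod.sum_Icc_mul_natCast _ d fun x => x⁻¹ʳ ^ 2,
    mul_smul_comm, ZMod.three_mul_sum_ringInverse_sq_eq_zero (hpodd.pow), smul_zero]
  -- the terms with `p ∣ j` vanish anyway, `Ring.inverse` being `0` on non-units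
  rw [← ZMod.isUnit_natCast_primePow_iff hp hk]
  contrapose! hj
  rw [Ring.inverse_non_unit _ hj, zero_pow two_ne_zero]

theorem ZMod.six_mul_sq_mul_sum_ringInverse_eq_zero {p k : ℕ} (hp : p.Prime) (hpodd : Odd p)
    (hk : k ≠ 0) (d : ℕ) :
    6 * ((d * p ^ k : ℕ) : ZMod (p ^ (3 * k))) ^ 2 *
      ∑ j ∈ (Icc 1 (d * p ^ k)).filter (¬ p ∣ ·),
        ((j : ZMod (p ^ (3 * k))) * ((d * p ^ k : ℕ) - j))⁻¹ʳ = 0 := by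
  have : NeZero (p ^ (3 * k)) := ⟨pow_ne_zero _ hp.ne_zero⟩
  have hdvd : p ^ k ∣ p ^ (3 * k) := pow_dvd_pow p (by omega)
  have hN : ((d * p ^ k : ℕ) : ZMod (p ^ k)) = 0 :=
    (ZMod.natCast_eq_zero_iff _ _).2 (dvd_mul_left _ _)
  have hterm : ∀ j ∈ (Icc 1 (d * p ^ k)).filter (¬ p ∣ ·),
      ZMod.castHom hdvd (ZMod (p ^ k)) ((j : ZMod (p ^ (3 * k))) * ((d * p ^ k : ℕ) - j))⁻¹ʳ
        = -(j : ZMod (p ^ k))⁻¹ʳ ^ 2 := fun j hj => by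
    rw [map_ringInverse _ (ZMod.isUnit_natCast_mul_sub hp (by omega)
      (dvd_mul_of_dvd_right (dvd_pow_self p hk) d) hj)]
    simp only [map_mul, map_sub, map_natCast, hN, zero_sub, mul_neg, ← sq, Ring.inverse_neg,
      Ring.inverse_pow]
  have hreduced : ZMod.castHom hdvd (ZMod (p ^ k)) (6 * d ^ 2 *
      ∑ j ∈ (Icc 1 (d * p ^ k)).filter (¬ p ∣ ·),
        ((j : ZMod (p ^ (3 * k))) * ((d * p ^ k : ℕ) - j))⁻¹ʳ) = 0 := by
    simp only [map_mul, map_pow, map_natCast, map_ofNat, map_sum]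
    rw [sum_congr rfl hterm, sum_neg_distrib]
    linear_combination
      (-2 * (d : ZMod (p ^ k)) ^ 2) * three_mul_sum_filter_ringInverse_sq_eq_zero hp hpodd hk d
  calc _ = ((p ^ (2 * k) : ℕ) : ZMod (p ^ (3 * k))) * (6 * d ^ 2 *
        ∑ j ∈ (Icc 1 (d * p ^ k)).filter (¬ p ∣ ·),
          ((j : ZMod (p ^ (3 * k))) * ((d * p ^ k : ℕ) - j))⁻¹ʳ) := by
        push_cast
        ring
    _ = 0 := natCast_mul_eq_zero_of_castHom_eq_zero hdvd (dvd_of_eq (by ring)) hreduced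

theorem ZMod.sq_prod_two_mul_add_eq_sq_prod {p k : ℕ} (hp : p.Prime) (hpodd : Odd p)
    (hk : k ≠ 0) (d : ℕ) :
    (∏ j ∈ (Icc 1 (d * p ^ k)).filter (¬ p ∣ ·),
        (2 * ((d * p ^ k : ℕ) : ZMod (p ^ (3 * k))) + j)) ^ 2 =
      (∏ j ∈ (Icc 1 (d * p ^ k)).filter (¬ p ∣ ·), (j : ZMod (p ^ (3 * k)))) ^ 2 := by
  set S := (Icc 1 (d * p ^ k)).filter (¬ p ∣ ·)
  set N : ZMod (p ^ (3 * k)) := ((d * p ^ k : ℕ) : ZMod (p ^ (3 * k)))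
  have hpN : p ∣ d * p ^ k := dvd_mul_of_dvd_right (dvd_pow_self p hk) d
  have hreflect : ∀ j ∈ S, j ≤ d * p ^ k ∧ d * p ^ k - j ∈ S :=
    fun j => sub_mem_filter_Icc_not_dvd hpN
  have ht : (6 * N ^ 2) ^ 2 = 0 := by
    linear_combination 36 * N * ZMod.natCast_mul_pow_pow_three_eq_zero p k d
  calc (∏ j ∈ S, (2 * N + j)) ^ 2
      = ∏ j ∈ S, ((j : ZMod (p ^ (3 * k))) * (N - j) + 6 * N ^ 2) := by
        rw [sq_prod_add_natCast_of_reflect hreflect]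
        exact prod_congr rfl fun j _ => by ring
    _ = (∏ j ∈ S, (j : ZMod (p ^ (3 * k))) * (N - j)) *
          (1 + 6 * N ^ 2 * ∑ j ∈ S, ((j : ZMod (p ^ (3 * k))) * (N - j))⁻¹ʳ) :=
        prod_add_of_sq_eq_zero ht S fun j => ZMod.isUnit_natCast_mul_sub hp (by omega) hpN
    _ = ∏ j ∈ S, (j : ZMod (p ^ (3 * k))) * (N - j) := by
        rw [ZMod.six_mul_sq_mul_sum_ringInverse_eq_zero hp hpodd hk, add_zero, mul_one]
    _ = (∏ j ∈ S, (j : ZMod (p ^ (3 * k)))) ^ 2 := by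
        simpa only [zero_add, zero_mul, add_zero] using
          (sq_prod_add_natCast_of_reflect hreflect (0 : ZMod (p ^ (3 * k)))).symm

theorem stmt_5_general (p k d : ℕ) (hp : p.Prime) (hpodd : Odd p) (hk : 1 ≤ k) :
    (∏ j ∈ (Finset.Icc 1 (d * p^k)).filter (fun j => ¬ p ∣ j), ((2*p^k*d : ℤ) + j)) ≡
      (∏ j ∈ (Finset.Icc 1 (d * p^k)).filter (fun j => ¬ p ∣ j), (j : ℤ)) [ZMOD (p^(3*k))] := by
  have hk0 : k ≠ 0 := by omega
  rw [show (p : ℤ) ^ (3 * k) = ((p ^ (3 * k) : ℕ) : ℤ) by push_cast; rfl,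
    ← ZMod.intCast_eq_intCast_iff]
  push_cast
  set N : ZMod (p ^ (3 * k)) := ((d * p ^ k : ℕ) : ZMod (p ^ (3 * k))) with hN
  have hx : (2 * p ^ k * d : ZMod (p ^ (3 * k))) = 2 * N := by rw [hN]; push_cast; ring
  have hN_nilpotent : IsNilpotent N := ⟨3, ZMod.natCast_mul_pow_pow_three_eq_zero p k d⟩
  have hunit :
      ∀ j ∈ (Icc 1 (d * p ^ k)).filter (¬ p ∣ ·), IsUnit (j : ZMod (p ^ (3 * k))) :=
    fun j hj => (ZMod.isUnit_natCast_primePow_iff hp (by omega)).2 (mem_filter.1 hj).2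
  rw [hx]
  exact eq_of_sq_eq_sq_of_isNilpotent_sub (ZMod.isUnit_two_of_odd hpodd.pow)
    (IsUnit.prod_iff.2 hunit)
    (((Commute.all 2 N).isNilpotent_mul_left hN_nilpotent).prod_add_sub_prod _ _)
    (ZMod.sq_prod_two_mul_add_eq_sq_prod hp hpodd hk0 d)

theorem stmt_5 (p k d : ℕ) (hp : p.Prime) (hpodd : Odd p) (hk : 1 ≤ k)
    (hd : 0 < d) (hnd : ¬ p ∣ d) :
    (∏ j ∈ (Finset.Icc 1 (d * p^k)).filter (fun j => ¬ p ∣ j), ((2*p^k*d : ℤ) + j)) ≡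
      (∏ j ∈ (Finset.Icc 1 (d * p^k)).filter (fun j => ¬ p ∣ j), (j : ℤ)) [ZMOD (p^(3*k))] :=
  stmt_5_general p k d hp hpodd hk
end

section
/- Let p be an odd prime, k \geq 1, and d a positive integer coprime to p. Then p^k divides the numerator of the rational number \sum_{1 \le j \le d p^k, p \nmid j} 1/j. -/
private lemma padicNorm_pow' (p : ℕ) [Fact p.Prime] (q : ℚ) (n : ℕ) :
    padicNorm p (q ^ n) = (padicNorm p q) ^ n := by
  induction n with
  | zero => simp [padicNorm.one]
  | succ n ih => rw [pow_succ, pow_succ, padicNorm.mul, ih]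

theorem stmt_6 (p k d : ℕ) (hp : p.Prime) (hpodd : Odd p) (hk : 1 ≤ k)
    (hd : 0 < d) (hnd : ¬ p ∣ d) :
    ((p : ℤ))^k ∣ (∑ j ∈ (Finset.Icc 1 (d * p^k)).filter (fun j => ¬ p ∣ j), (1 : ℚ)/j).num := by
  haveI := Fact.mk hp
  set N := d * p ^ k with hN
  set A := (Finset.Icc 1 N).filter (fun j => ¬ p ∣ j) with hA
  set S := ∑ j ∈ A, (1 : ℚ)/j with hS
  have hpN : p ∣ N := Dvd.dvd.mul_left (dvd_pow_self p (by omega)) d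
  have hmem : ∀ j ∈ A, 1 ≤ j ∧ j ≤ N ∧ ¬ p ∣ j := by
    intro j hj
    simp only [hA, Finset.mem_filter, Finset.mem_Icc] at hj
    tauto
  have hmem' : ∀ j, 1 ≤ j → j ≤ N → ¬ p ∣ j → j ∈ A := by
    intro j h1 h2 h3
    simp only [hA, Finset.mem_filter, Finset.mem_Icc]
    tauto
  have hndvd : ∀ j ∈ A, ¬ p ∣ (N - j) := by
    intro j hj hdvd
    obtain ⟨h1, h2, h3⟩ := hmem j hj
    have := Nat.dvd_sub hpN hdvd
    rw [show N - (N - j) = j by omega] at this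
    exact h3 this
  have hsub : ∀ j ∈ A, N - j ∈ A := by
    intro j hj
    obtain ⟨h1, h2, h3⟩ := hmem j hj
    have hjN : j ≠ N := by rintro rfl; exact h3 hpN
    exact hmem' _ (by omega) (by omega) (hndvd j hj)
  -- reindex by the involution j ↦ N - j
  have hswap : S = ∑ j ∈ A, (1 : ℚ)/((N - j : ℕ) : ℚ) := by
    rw [hS]
    apply Finset.sum_nbij' (i := fun j => N - j) (j := fun j => N - j)
    · exact hsub
    · exact hsub
    · intro j hj; obtain ⟨h1, h2, _⟩ := hmem j hj; omega
    · intro j hj; obtain ⟨h1, h2, _⟩ := hmem j hj; omega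
    · intro j hj
      obtain ⟨h1, h2, _⟩ := hmem j hj
      congr 1
      exact_mod_cast (by omega : j = N - (N - j))
  have h2S : 2 * S = ∑ j ∈ A, ((N : ℚ)/((j : ℚ) * ((N - j : ℕ) : ℚ))) := by
    have : 2 * S = ∑ j ∈ A, ((1 : ℚ)/j + (1 : ℚ)/((N - j : ℕ) : ℚ)) := by
      rw [Finset.sum_add_distrib, ← hS, ← hswap]; ring
    rw [this]
    apply Finset.sum_congr rfl
    intro j hj
    obtain ⟨h1, h2, h3⟩ := hmem j hj
    have hjN : j ≠ N := by rintro rfl; exact h3 hpN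
    have hcast : ((N - j : ℕ) : ℚ) = (N : ℚ) - (j : ℚ) := by
      rw [Nat.cast_sub h2]
    have hj0 : (j : ℚ) ≠ 0 := by positivity
    have hj0' : ((N - j : ℕ) : ℚ) ≠ 0 := by
      have : (0 : ℕ) < N - j := by omega
      positivity
    rw [hcast] at hj0' ⊢
    field_simp
    ring
  -- norm bound on each term
  have hterm : ∀ j ∈ A,
      padicNorm p ((N : ℚ)/((j : ℚ) * ((N - j : ℕ) : ℚ))) ≤ ((p : ℚ))^(-(k : ℤ)) := by
    intro j hj
    obtain ⟨h1, h2, h3⟩ := hmem j hj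
    have hnj : padicNorm p ((j : ℚ)) = 1 := (padicNorm.nat_eq_one_iff j).mpr h3
    have hnNj : padicNorm p (((N - j : ℕ) : ℚ)) = 1 :=
      (padicNorm.nat_eq_one_iff (N - j)).mpr (hndvd j hj)
    have hnd' : padicNorm p ((d : ℚ)) = 1 := (padicNorm.nat_eq_one_iff d).mpr hnd
    have hnN : padicNorm p ((N : ℚ)) = ((p : ℚ))^(-(k : ℤ)) := by
      have : ((N : ℚ)) = (d : ℚ) * ((p : ℚ))^k := by rw [hN]; push_cast; ring
      rw [this, padicNorm.mul, hnd', one_mul, padicNorm_pow',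
        padicNorm.padicNorm_p_of_prime, inv_pow, ← zpow_natCast, ← zpow_neg]
    rw [padicNorm.div, padicNorm.mul, hnj, hnNj, hnN]
    simp
  have hnormS : padicNorm p S ≤ ((p : ℚ))^(-(k : ℤ)) := by
    have h2 : padicNorm p ((2 : ℚ)) = 1 := by
      have : ¬ p ∣ 2 := by
        intro h
        have h2 := Nat.le_of_dvd (by norm_num) h
        have h3 := hp.two_le
        have h4 := Nat.odd_iff.mp hpodd
        omega
      exact_mod_cast (padicNorm.nat_eq_one_iff 2).mpr this
    have := padicNorm.sum_le' (p := p) hterm (by positivity)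
    rw [← h2S, padicNorm.mul, h2, one_mul] at this
    exact this
  -- conclude divisibility of the numerator
  have hnum : padicNorm p ((S.num : ℚ)) ≤ ((p : ℚ))^(-(k : ℤ)) := by
    have hden : padicNorm p ((S.den : ℚ)) ≤ 1 := padicNorm.of_nat S.den
    have heq : ((S.num : ℚ)) = S * (S.den : ℚ) := (Rat.mul_den_eq_num S).symm
    rw [heq, padicNorm.mul]
    calc padicNorm p S * padicNorm p ((S.den : ℚ))
        ≤ ((p : ℚ))^(-(k : ℤ)) * 1 :=
          mul_le_mul hnormS hden (padicNorm.nonneg _) (by positivity)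
      _ = ((p : ℚ))^(-(k : ℤ)) := mul_one _
  have := (padicNorm.dvd_iff_norm_le (p := p) (n := k) (z := S.num)).mpr hnum
  exact_mod_cast this
end

section
/- For every positive integer d, the 2-adic valuation of \binom{6d-1}{2d-1} equals the 2-adic valuation of \binom{3d-1}{d-1}. -/
private lemma sum_digits_two_mul (n : ℕ) (h : n ≠ 0) :
    (Nat.digits 2 (2 * n)).sum = (Nat.digits 2 n).sum := by
  rw [Nat.digits_def' (by norm_num) (by omega)]
  simp [Nat.mul_div_cancel_left n (by norm_num : 0 < 2), Nat.mul_mod_right]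

private lemma sum_digits_two_mul_add_one (n : ℕ) :
    (Nat.digits 2 (2 * n + 1)).sum = (Nat.digits 2 n).sum + 1 := by
  rw [Nat.digits_def' (by norm_num) (by omega)]
  simp [Nat.add_mul_div_left, Nat.mul_add_mod, add_comm]

theorem stmt_11 (d : ℕ) (hd : 0 < d) :
    padicValNat 2 (Nat.choose (6*d - 1) (2*d - 1)) =
      padicValNat 2 (Nat.choose (3*d - 1) (d - 1)) := by
  haveI : Fact (Nat.Prime 2) := ⟨Nat.prime_two⟩
  have h1 := sub_one_mul_padicValNat_choose_eq_sub_sum_digits (p := 2)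
    (k := 2*d - 1) (n := 6*d - 1) (by omega)
  have h2 := sub_one_mul_padicValNat_choose_eq_sub_sum_digits (p := 2)
    (k := d - 1) (n := 3*d - 1) (by omega)
  simp only [show (2:ℕ) - 1 = 1 from rfl, one_mul] at h1 h2
  rw [h1, h2]
  have e1 : 6*d - 1 - (2*d - 1) = 2 * (2*d) := by omega
  have e2 : 2*d - 1 = 2 * (d-1) + 1 := by omega
  have e3 : 6*d - 1 = 2 * (3*d - 1) + 1 := by omega
  have e4 : 3*d - 1 - (d - 1) = 2 * d := by omega
  rw [e1, e2, e3, e4, sum_digits_two_mul_add_one, sum_digits_two_mul_add_one,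
    sum_digits_two_mul _ (by omega), sum_digits_two_mul _ (by omega)]
  omega
end

section
/- Call a positive integer d binarily well-spaced if its binary expansion contains no two consecutive 1's. If d is well-spaced, then b(3d) = 2 b(d), where b denotes the binary digit sum. -/
/-- `b t` is the number of ones in the binary expansion of `t`. -/
def b (t : ℕ) : ℕ := (Nat.digits 2 t).sum

/-- A positive integer is binarily well-spaced if its binary expansion has
no two consecutive ones. -/
def WellSpaced (d : ℕ) : Prop := ∀ i, ¬ (d.testBit i ∧ d.testBit (i + 1))

lemma b_two_mul (n : ℕ) : b (2 * n) = b n := by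
  rcases Nat.eq_zero_or_pos n with h | h
  · simp [h]
  · unfold b
    rw [Nat.digits_def' (by norm_num : (1:ℕ) < 2) (by omega : 0 < 2 * n)]
    simp [Nat.mul_div_cancel_left _ (by norm_num : 0 < 2), Nat.mul_mod_right]

lemma b_two_mul_add_one (n : ℕ) : b (2 * n + 1) = b n + 1 := by
  unfold b
  rw [Nat.digits_def' (by norm_num : (1:ℕ) < 2) (by omega : 0 < 2 * n + 1)]
  have h1 : (2 * n + 1) % 2 = 1 := by omega
  have h2 : (2 * n + 1) / 2 = n := by omega
  rw [h1, h2]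
  simp [Nat.add_comm]

lemma ws_div (d : ℕ) (hws : WellSpaced d) : WellSpaced (d / 2) := by
  intro i ⟨h1, h2⟩
  exact hws (i + 1) ⟨by rw [← Nat.testBit_succ] at h1; exact h1,
    by rw [← Nat.testBit_succ] at h2; exact h2⟩

theorem stmt_13 (d : ℕ) (hd : 0 < d) (hws : WellSpaced d) :
    b (3*d) = 2 * b d := by
  induction d using Nat.strong_induction_on with
  | _ d IH =>
    rcases Nat.even_or_odd d with ⟨q, hq⟩ | ⟨q, hq⟩
    · -- d = 2q
      have hq' : d = 2 * q := by omega
      have hq0 : 0 < q := by omega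
      have hwq : WellSpaced q := by
        have := ws_div d hws
        rwa [hq', Nat.mul_div_cancel_left _ (by norm_num : 0 < 2)] at this
      have h3 : 3 * d = 2 * (3 * q) := by omega
      rw [hq', show 3*(2*q)=2*(3*q) from by ring, b_two_mul, b_two_mul, IH q (by omega) hq0 hwq]
    · -- d = 2q + 1, and q is even
      have hbit0 : d.testBit 0 = true := by
        rw [Nat.testBit_zero]; simp; omega
      have hbit1 : d.testBit 1 = false := by
        by_contra h
        exact hws 0 ⟨hbit0, by simpa using h⟩
      have hqeven : q % 2 = 0 := by
        have := hbit1
        rw [show (1:ℕ) = Nat.succ 0 from rfl, Nat.testBit_succ, Nat.testBit_zero] at this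
        have hd2 : d / 2 = q := by omega
        rw [hd2] at this
        simpa using this
      obtain ⟨m, hm⟩ : ∃ m, q = 2 * m := ⟨q / 2, by omega⟩
      -- d = 4m + 1
      have hd4 : d = 2 * (2 * m) + 1 := by omega
      have h3d : 3 * d = 2 * (2 * (3 * m) + 1) + 1 := by omega
      rw [hd4, show 3*(2*(2*m)+1)=2*(2*(3*m)+1)+1 from by ring, b_two_mul_add_one]
      simp only [b_two_mul_add_one, b_two_mul]
      rcases Nat.eq_zero_or_pos m with hm0 | hm0
      · simp [hm0, b]
      · have hwm : WellSpaced m := by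
          have h1 := ws_div _ (ws_div d hws)
          have : d / 2 / 2 = m := by omega
          rwa [this] at h1
        rw [IH m (by omega) hm0 hwm]
        ring
end

section
/- For every odd positive integer d that is binarily well-spaced, b(3d - 1) = 2 b(d) - 1 = b(d) + b(d-1). -/
lemma b_zero : b 0 = 0 := by simp [b]

lemma b_rec (n : ℕ) (hn : 0 < n) : b n = n % 2 + b (n / 2) := by
  unfold b
  rw [Nat.digits_def' (by norm_num : 1 < 2) hn]
  simp

lemma b_add_of_and_zero (x y : ℕ) (h : x &&& y = 0) : b (x + y) = b x + b y := by
  induction x using Nat.strong_induction_on generalizing y with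
  | _ x ih =>
    rcases Nat.eq_zero_or_pos x with hx | hx
    · simp [hx, b_zero]
    have h2 : x / 2 &&& y / 2 = 0 := by
      apply Nat.eq_of_testBit_eq
      intro i
      simp only [Nat.testBit_and, Nat.testBit_div_two, Nat.zero_testBit]
      have := congrArg (fun n => n.testBit (i+1)) h
      simpa [Nat.testBit_and] using this
    have h0 : ¬(x % 2 = 1 ∧ y % 2 = 1) := by
      have := congrArg (fun n => n.testBit 0) h
      simp [Nat.testBit_and, Nat.testBit_zero] at this
      omega
    have hsum : (x + y) % 2 = x % 2 + y % 2 := by omega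
    have hdiv : (x + y) / 2 = x / 2 + y / 2 := by omega
    rw [b_rec _ (by omega), hsum, hdiv,
      ih (x / 2) (Nat.div_lt_self hx one_lt_two) _ h2, b_rec x hx]
    rcases Nat.eq_zero_or_pos y with hy | hy
    · simp [hy, b_zero]
    · rw [b_rec y hy]; ring

theorem stmt_15 (d : ℕ) (hd : 0 < d) (hodd : Odd d) (hws : WellSpaced d) :
    b (3*d - 1) = 2 * b d - 1 ∧ b (3*d - 1) = b d + b (d - 1) := by
  have hmod : d % 2 = 1 := Nat.odd_iff.mp hodd
  have hand : 2 * d &&& (d - 1) = 0 := by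
    apply Nat.eq_of_testBit_eq
    intro i
    simp only [Nat.testBit_and, Nat.zero_testBit]
    cases i with
    | zero =>
      simp [Nat.testBit_zero, Nat.mul_mod_right]
    | succ j =>
      have ht1 : (2 * d).testBit (j + 1) = d.testBit j := by
        rw [Nat.testBit_succ]
        congr 1
        omega
      have ht2 : (d - 1).testBit (j + 1) = d.testBit (j + 1) := by
        rw [Nat.testBit_succ, Nat.testBit_succ]
        congr 1
        omega
      rw [ht1, ht2]
      have := hws j
      by_cases h1 : d.testBit j <;> by_cases h2 : d.testBit (j+1) <;>
        simp_all
  have hb2d : b (2 * d) = b d := by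
    rw [b_rec (2 * d) (by omega)]
    simp [Nat.mul_div_cancel_left, Nat.mul_mod_right]
  have hbd : b d = b (d - 1) + 1 := by
    rw [b_rec d hd, hmod]
    rcases Nat.eq_or_lt_of_le hd with h1 | h1
    · simp [← h1, b_zero]
    · rw [b_rec (d - 1) (by omega)]
      have : (d - 1) % 2 = 0 := by omega
      rw [this]
      have : (d - 1) / 2 = d / 2 := by omega
      rw [this]
      omega
  have key : b (3 * d - 1) = b d + b (d - 1) := by
    have h3 : 3 * d - 1 = 2 * d + (d - 1) := by omega
    rw [h3, b_add_of_and_zero _ _ hand, hb2d]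
  exact ⟨by omega, key⟩
end

section
/- For a positive integer d, \binom{3d-1}{d-1} \not\equiv \binom{6d-1}{2d-1} \pmod{8} if and only if d is odd and binarily well-spaced; in that case \binom{6d-1}{2d-1} - \binom{3d-1}{d-1} \equiv 4 \pmod 8. -/
open Finset Nat

def oddProd (m : ℕ) : ℕ := ∏ j ∈ range m, (2 * j + 1)

lemma oddProd_succ (m : ℕ) : oddProd (m + 1) = oddProd m * (2 * m + 1) :=
  prod_range_succ _ m

lemma oddProd_add (m n : ℕ) :
    oddProd (m + n) = oddProd m * ∏ j ∈ range n, (2 * (m + j) + 1) :=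
  prod_range_add _ m n

lemma odd_oddProd (m : ℕ) : Odd (oddProd m) :=
  prod_induction _ Odd (fun _ _ => Odd.mul) odd_one fun j _ => odd_two_mul_add_one j

lemma factorial_two_mul_eq (m : ℕ) : (2 * m)! = 2 ^ m * m ! * oddProd m := by
  induction m with
  | zero => rfl
  | succ m ih =>
    rw [show 2 * (m + 1) = 2 * m + 1 + 1 by ring, factorial_succ, factorial_succ, ih,
      oddProd_succ, factorial_succ]
    ring

lemma choose_two_mul_mul_oddProd (a b : ℕ) :
    (2 * (a + b)).choose (2 * a) * (oddProd a * oddProd b) =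
      (a + b).choose a * oddProd (a + b) := by
  have hpos : 0 < 2 ^ (a + b) * (a ! * b !) := by positivity
  refine Nat.eq_of_mul_eq_mul_right hpos ?_
  have h := add_choose_mul_factorial_mul_factorial (2 * b) (2 * a)
  rw [← mul_add, add_comm b, factorial_two_mul_eq, factorial_two_mul_eq,
    factorial_two_mul_eq] at h
  have h' := add_choose_mul_factorial_mul_factorial b a
  rw [add_comm b] at h'
  calc (2 * (a + b)).choose (2 * a) * (oddProd a * oddProd b) * (2 ^ (a + b) * (a ! * b !))
      = (2 * (a + b)).choose (2 * a) * (2 ^ b * b ! * oddProd b) * (2 ^ a * a ! * oddProd a) := by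
        rw [pow_add]; ring
    _ = 2 ^ (a + b) * (a + b)! * oddProd (a + b) := h
    _ = (a + b).choose a * oddProd (a + b) * (2 ^ (a + b) * (a ! * b !)) := by rw [← h']; ring

lemma choose_mul_eq_mul_choose_pred (m : ℕ) {k : ℕ} (hk : 0 < k) :
    (m * k).choose k = m * (m * k - 1).choose (k - 1) := by
  rcases Nat.eq_zero_or_pos m with rfl | hm
  · simp [choose_eq_zero_of_lt hk]
  have h := add_one_mul_choose_eq (m * k - 1) (k - 1)
  rw [Nat.sub_add_cancel (one_le_iff_ne_zero.mpr (by positivity)), Nat.sub_add_cancel hk] at h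
  refine Nat.eq_of_mul_eq_mul_right hk ?_
  rw [← h]
  ring

lemma odd_add_choose_iff (a b : ℕ) :
    Odd ((a + b).choose a) ↔ ∀ i, ¬(a.testBit i ∧ b.testBit i) := by
  induction a using Nat.strong_induction_on generalizing b with
  | _ a ih =>
  rcases Nat.eq_zero_or_pos a with rfl | ha
  · simp
  have : Fact (Nat.Prime 2) := ⟨prime_two⟩
  rw [Nat.odd_iff, Choose.choose_modEq_choose_mod_mul_choose_div_nat, ← Nat.odd_iff, Nat.odd_mul,
    ← and_forall_add_one]
  simp only [testBit_zero, ← testBit_div_two, decide_eq_true_eq]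
  by_cases hab : a % 2 = 1 ∧ b % 2 = 1
  · simp [hab, show (a + b) % 2 = 0 by omega]
  · rw [show (a + b) / 2 = a / 2 + b / 2 by omega, ih _ (by omega)]
    have : Odd (((a + b) % 2).choose (a % 2)) := by
      rcases mod_two_eq_zero_or_one a with h | h
      · simp [h, add_mod]
      · simp [h, show (a + b) % 2 = 1 by omega]
    simp [this, hab]

lemma wellSpaced_iff_testBit_two_mul (d : ℕ) :
    WellSpaced d ↔ ∀ i, ¬(d.testBit i ∧ (2 * d).testBit i) := by
  rw [← and_forall_add_one]
  simp [WellSpaced, testBit_zero, ← testBit_div_two, and_comm]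

lemma odd_choose_three_mul_sub_one_iff {d : ℕ} (hd : 0 < d) :
    Odd ((3 * d - 1).choose (d - 1)) ↔ WellSpaced d := by
  rw [wellSpaced_iff_testBit_two_mul, ← odd_add_choose_iff, show d + 2 * d = 3 * d by ring,
    choose_mul_eq_mul_choose_pred 3 hd, Nat.odd_mul]
  simp [show Odd 3 by decide]

lemma choose_six_mul_sub_one_mul_oddProd {d : ℕ} (hd : 0 < d) :
    (6 * d - 1).choose (2 * d - 1) * oddProd d
      = (3 * d - 1).choose (d - 1) * ∏ j ∈ range d, (2 * (2 * d + j) + 1) := by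
  have hB : (2 * (d + 2 * d)).choose (2 * d) = 3 * (6 * d - 1).choose (2 * d - 1) := by
    rw [show 2 * (d + 2 * d) = 3 * (2 * d) by ring, choose_mul_eq_mul_choose_pred 3 (by omega),
      show 3 * (2 * d) = 6 * d by ring]
  have hA : (d + 2 * d).choose d = 3 * (3 * d - 1).choose (d - 1) := by
    rw [show d + 2 * d = 3 * d by ring, choose_mul_eq_mul_choose_pred 3 hd]
  have h := choose_two_mul_mul_oddProd d (2 * d)
  rw [hB, hA, add_comm d, oddProd_add] at h
  have hpos : 0 < 3 * oddProd (2 * d) := by have := (odd_oddProd (2 * d)).pos; positivity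
  refine Nat.eq_of_mul_eq_mul_left hpos ?_
  linear_combination h

lemma four_mul_natCast_zmod_eight (n : ℕ) : 4 * (n : ZMod 8) = if Odd n then 4 else 0 := by
  have h8 : (8 : ZMod 8) = 0 := rfl
  rcases n.even_or_odd' with ⟨k, rfl | rfl⟩
  · rw [if_neg (not_odd_iff_even.mpr (even_two_mul k))]
    push_cast
    linear_combination (k : ZMod 8) * h8
  · rw [if_pos (odd_two_mul_add_one k)]
    push_cast
    linear_combination (k : ZMod 8) * h8

lemma one_add_four_mul_pow_self (d : ℕ) : (1 + 4 * (d : ZMod 8)) ^ d = 1 + 4 * d := by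
  rw [four_mul_natCast_zmod_eight]
  split_ifs with hd
  · obtain ⟨k, rfl⟩ := hd
    rw [pow_succ, pow_mul, show ((1 + 4 : ZMod 8)) ^ 2 = 1 by decide, one_pow, one_mul]
  · rw [add_zero, one_pow]

lemma natCast_prod_two_mul_two_mul_add_add_one (k n : ℕ) :
    ((∏ j ∈ range n, (2 * (2 * k + j) + 1) : ℕ) : ZMod 8) = oddProd n * (1 + 4 * k) ^ n := by
  have h8 : (8 : ZMod 8) = 0 := rfl
  have h := prod_mul_pow_card (s := range n) (f := fun j => 2 * (j : ZMod 8) + 1)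
    (b := 1 + 4 * (k : ZMod 8))
  rw [card_range] at h
  push_cast [oddProd]
  rw [h]
  refine prod_congr rfl fun j _ => ?_
  linear_combination (-(k * j : ZMod 8)) * h8

lemma isUnit_natCast_oddProd (n : ℕ) : IsUnit (oddProd n : ZMod 8) :=
  (ZMod.isUnit_iff_coprime _ 8).mpr ((coprime_two_right.mpr (odd_oddProd n)).pow_right 3)

lemma natCast_choose_six_mul_sub_one {d : ℕ} (hd : 0 < d) :
    ((6 * d - 1).choose (2 * d - 1) : ZMod 8) = (3 * d - 1).choose (d - 1) * (1 + 4 * d) := by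
  have h := congrArg (Nat.cast : ℕ → ZMod 8) (choose_six_mul_sub_one_mul_oddProd hd)
  rw [Nat.cast_mul, Nat.cast_mul, natCast_prod_two_mul_two_mul_add_add_one,
    one_add_four_mul_pow_self] at h
  exact (isUnit_natCast_oddProd d).mul_right_cancel (h.trans (by ring))

theorem stmt_17 (d : ℕ) (hd : 0 < d) :
    (¬ ((Nat.choose (3*d - 1) (d - 1) : ℤ) ≡ (Nat.choose (6*d - 1) (2*d - 1) : ℤ) [ZMOD 8]) ↔
      Odd d ∧ WellSpaced d) ∧
    (Odd d ∧ WellSpaced d →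
      ((Nat.choose (6*d - 1) (2*d - 1) : ℤ) - (Nat.choose (3*d - 1) (d - 1) : ℤ)) ≡ 4 [ZMOD 8]) := by
  have hmod (a b : ℤ) : a ≡ b [ZMOD 8] ↔ (a : ZMod 8) = b :=
    (ZMod.intCast_eq_intCast_iff a b 8).symm
  have hsub : ((6 * d - 1).choose (2 * d - 1) : ZMod 8) - (3 * d - 1).choose (d - 1)
      = 4 * (d * (3 * d - 1).choose (d - 1) : ℕ) := by
    rw [natCast_choose_six_mul_sub_one hd]
    push_cast
    ring
  have hodd : Odd (d * (3 * d - 1).choose (d - 1)) ↔ Odd d ∧ WellSpaced d := by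
    rw [Nat.odd_mul, odd_choose_three_mul_sub_one_iff hd]
  simp only [hmod, Int.cast_sub, Int.cast_natCast, Int.cast_ofNat]
  rw [eq_comm, ← sub_eq_zero, hsub, four_mul_natCast_zmod_eight]
  by_cases hP : Odd d ∧ WellSpaced d
  · rw [if_pos (hodd.mpr hP)]
    exact ⟨iff_of_true (by decide) hP, fun _ => rfl⟩
  · rw [if_neg (hodd.not.mpr hP)]
    exact ⟨iff_of_false (not_not.mpr rfl) hP, fun h => absurd h hP⟩
end
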